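/- arXiv:1610.05672 — 7 statements merged into one kernel-verified Lean document; each statement's English description precedes it below -/
import Mathlib

section
/- Let (Y_i)_{i≥0} be real-valued random variables on a probability space satisfying E[|Y_0| + Σ_{i=1}^∞ |Y_i − Y_{i−1}|] < ∞. Then the sequence (Y_i) converges almost surely and in L¹ to an integrable limit, so L := lim_{i→∞} E[Y_i] exists; moreover, if N is an ℕ-valued random variable independent of the sequence (Y_i) with P(N ≥ i) > 0 for every i ≥ 1, then the Russian roulette estimator S := Y_0 + Σ_{i=1}^N (Y_i − Y_{i−1})/P(N ≥ i) is integrable and E[S] = L. -/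
/-!
Writing `D i = Y (i + 1) - Y i`, the sequence `Y` is `Y 0` plus the partial sums of a series of
functions whose `L¹` norms are summable. Such a series converges almost everywhere and in `L¹`,
which gives the limit `Y 0 + ∑ D i` and `L = E[Y 0] + ∑ E[D i]`.

The estimator is `Y 0 + ∑ᵢ 1{i < N} D i / P(i < N)`. As `N` is independent of `D i`, its `i`-th
term has the same mean and the same `L¹` norm as `D i`, so this series too has summable `L¹` norms
and can be integrated termwise, giving `E[Y 0] + ∑ E[D i] = L`.
-/

open MeasureTheory Filter ProbabilityTheory Topology
open scoped ENNReal

section TopologicalAddGroup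

variable {G : Type*} [AddCommGroup G] [TopologicalSpace G] [IsTopologicalAddGroup G] {u : ℕ → G}

lemma tendsto_of_hasSum_sub {s : G} (h : HasSum (fun i => u (i + 1) - u i) s) :
    Tendsto u atTop (𝓝 (u 0 + s)) := by
  simpa only [Finset.sum_range_sub, add_sub_cancel] using
    (tendsto_const_nhds (x := u 0)).add h.tendsto_sum_nat

lemma add_tsum_sub_eq_add_tsum_nat_add [T2Space G] (hu : Summable fun i => u (i + 1) - u i)
    (n : ℕ) : u 0 + ∑' i, (u (i + 1) - u i) = u n + ∑' i, (u (i + n + 1) - u (i + n)) := by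
  rw [← hu.sum_add_tsum_nat_add n, Finset.sum_range_sub]
  abel

end TopologicalAddGroup

lemma Finset.sum_Icc_one_eq_sum_range {M : Type*} [AddCommMonoid M] (f : ℕ → M) (n : ℕ) :
    ∑ i ∈ Finset.Icc 1 n, f i = ∑ i ∈ Finset.range n, f (i + 1) := by
  rw [Finset.range_eq_Ico, Finset.sum_Ico_add', zero_add, Finset.Ico_add_one_right_eq_Icc]

namespace MeasureTheory

variable {α E : Type*} [MeasurableSpace α] {μ : Measure α} [NormedAddCommGroup E]

section SummableLintegral

variable {f : ℕ → α → E}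

lemma ae_summable_norm_of_tsum_lintegral_enorm_ne_top (hf : ∀ i, AEStronglyMeasurable (f i) μ)
    (h : ∑' i, ∫⁻ a, ‖f i a‖ₑ ∂μ ≠ ∞) : ∀ᵐ a ∂μ, Summable fun i => ‖f i a‖ := by
  refine summable_norm_of_tsum_eLpNorm_ne_top le_rfl hf ?_
  simpa only [eLpNorm_one_eq_lintegral_enorm] using h

lemma integrable_of_tsum_lintegral_enorm_ne_top (hf : ∀ i, AEStronglyMeasurable (f i) μ)
    (h : ∑' i, ∫⁻ a, ‖f i a‖ₑ ∂μ ≠ ∞) (i : ℕ) : Integrable (f i) μ :=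
  ⟨hf i, (ENNReal.ne_top_of_tsum_ne_top h i).lt_top⟩

lemma lintegral_enorm_tsum_le (hf : ∀ i, AEStronglyMeasurable (f i) μ) :
    ∫⁻ a, ‖∑' i, f i a‖ₑ ∂μ ≤ ∑' i, ∫⁻ a, ‖f i a‖ₑ ∂μ := by
  rw [← lintegral_tsum fun i => (hf i).enorm]
  exact lintegral_mono fun a => enorm_tsum_le_tsum_enorm

lemma integrable_tsum_of_tsum_lintegral_enorm_ne_top [CompleteSpace E]
    (hf : ∀ i, AEStronglyMeasurable (f i) μ) (h : ∑' i, ∫⁻ a, ‖f i a‖ₑ ∂μ ≠ ∞) :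
    Integrable (fun a => ∑' i, f i a) μ := by
  refine ⟨aestronglyMeasurable_of_tendsto_ae atTop
    (fun n => Finset.aestronglyMeasurable_fun_sum (Finset.range n) fun i _ => hf i) ?_, ?_⟩
  · filter_upwards [ae_summable_norm_of_tsum_lintegral_enorm_ne_top hf h] with a ha
    exact ha.of_norm.hasSum.tendsto_sum_nat
  · exact (lintegral_enorm_tsum_le hf).trans_lt h.lt_top

lemma tendsto_lintegral_enorm_tsum_nat_add (hf : ∀ i, AEStronglyMeasurable (f i) μ)
    (h : ∑' i, ∫⁻ a, ‖f i a‖ₑ ∂μ ≠ ∞) :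
    Tendsto (fun n => ∫⁻ a, ‖∑' i, f (i + n) a‖ₑ ∂μ) atTop (𝓝 0) :=
  tendsto_of_tendsto_of_tendsto_of_le_of_le tendsto_const_nhds
    (ENNReal.tendsto_sum_nat_add _ h) (fun _ => zero_le)
    fun n => lintegral_enorm_tsum_le fun i => hf (i + n)

end SummableLintegral

section IntegrableVariation

variable {Y : ℕ → α → E}

lemma integrable_zero_and_tsum_lintegral_enorm_sub_ne_top
    (hY : ∀ i, AEStronglyMeasurable (Y i) μ)
    (h : ∫⁻ a, (‖Y 0 a‖ₑ + ∑' i, ‖Y (i + 1) a - Y i a‖ₑ) ∂μ ≠ ∞) :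
    Integrable (Y 0) μ ∧ ∑' i, ∫⁻ a, ‖Y (i + 1) a - Y i a‖ₑ ∂μ ≠ ∞ := by
  have hD i : AEStronglyMeasurable (fun a => Y (i + 1) a - Y i a) μ := (hY (i + 1)).sub (hY i)
  rw [lintegral_add_left' (hY 0).enorm, lintegral_tsum fun i => (hD i).enorm,
    ENNReal.add_ne_top] at h
  exact ⟨⟨hY 0, h.1.lt_top⟩, h.2⟩

lemma integrable_of_tsum_lintegral_enorm_sub_ne_top (hY0 : Integrable (Y 0) μ)
    (hY : ∀ i, AEStronglyMeasurable (Y i) μ) (h : ∑' i, ∫⁻ a, ‖Y (i + 1) a - Y i a‖ₑ ∂μ ≠ ∞) :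
    ∀ n, Integrable (Y n) μ
  | 0 => hY0
  | n + 1 => by
    simpa using (integrable_of_tsum_lintegral_enorm_sub_ne_top hY0 hY h n).add
      (integrable_of_tsum_lintegral_enorm_ne_top (fun i => (hY (i + 1)).sub (hY i)) h n)

lemma ae_tendsto_add_tsum_sub [CompleteSpace E] (hY : ∀ i, AEStronglyMeasurable (Y i) μ)
    (h : ∑' i, ∫⁻ a, ‖Y (i + 1) a - Y i a‖ₑ ∂μ ≠ ∞) :
    ∀ᵐ a ∂μ, Tendsto (Y · a) atTop (𝓝 (Y 0 a + ∑' i, (Y (i + 1) a - Y i a))) := by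
  have hD i : AEStronglyMeasurable (fun a => Y (i + 1) a - Y i a) μ := (hY (i + 1)).sub (hY i)
  filter_upwards [ae_summable_norm_of_tsum_lintegral_enorm_ne_top hD h] with a ha
  exact tendsto_of_hasSum_sub (u := (Y · a)) ha.of_norm.hasSum

lemma tendsto_lintegral_enorm_sub_add_tsum_sub [CompleteSpace E]
    (hY : ∀ i, AEStronglyMeasurable (Y i) μ) (h : ∑' i, ∫⁻ a, ‖Y (i + 1) a - Y i a‖ₑ ∂μ ≠ ∞) :
    Tendsto (fun n => ∫⁻ a, ‖Y n a - (Y 0 a + ∑' i, (Y (i + 1) a - Y i a))‖ₑ ∂μ) atTop (𝓝 0) := by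
  have hD i : AEStronglyMeasurable (fun a => Y (i + 1) a - Y i a) μ := (hY (i + 1)).sub (hY i)
  refine (tendsto_lintegral_enorm_tsum_nat_add hD h).congr fun n => lintegral_congr_ae ?_
  filter_upwards [ae_summable_norm_of_tsum_lintegral_enorm_ne_top hD h] with a ha
  rw [add_tsum_sub_eq_add_tsum_nat_add (u := (Y · a)) ha.of_norm n, sub_add_cancel_left,
    enorm_neg]

end IntegrableVariation

section IndependentThinning

variable [NormedSpace ℝ E] [MeasurableSpace E] [BorelSpace E] {β : Type*} [MeasurableSpace β]
  {N : α → β} {Z : α → E}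

lemma integral_indicator_preimage_of_indepFun (hNZ : IndepFun N Z μ) (hN : Measurable N)
    (hZ : AEStronglyMeasurable Z μ) {s : Set β} (hs : MeasurableSet s) :
    ∫ a, (N ⁻¹' s).indicator Z a ∂μ = μ.real (N ⁻¹' s) • ∫ a, Z a ∂μ := by
  have hsmul : (N ⁻¹' s).indicator Z = fun a => (N ⁻¹' s).indicator (1 : α → ℝ) a • Z a := by
    ext a
    by_cases ha : a ∈ N ⁻¹' s <;> simp [ha]
  have hindep : IndepFun ((N ⁻¹' s).indicator (1 : α → ℝ)) Z μ :=
    hNZ.comp (measurable_const.indicator hs) measurable_id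
  rw [hsmul, hindep.integral_fun_smul_eq_smul_integral
    (measurable_const.indicator (hN hs)).aestronglyMeasurable hZ, integral_indicator_one (hN hs)]

end IndependentThinning

section RussianRoulette

variable [NormedSpace ℝ E] {N : α → ℕ} {D : ℕ → α → E}

noncomputable def rouletteIncrement (μ : Measure α) (N : α → ℕ) (D : ℕ → α → E) (i : ℕ) :
    α → E :=
  {a | i < N a}.indicator fun a => (μ.real {b | i < N b})⁻¹ • D i a

noncomputable def rouletteEstimator (μ : Measure α) (N : α → ℕ) (D : ℕ → α → E) (a : α) : E :=
  ∑ i ∈ Finset.range (N a), (μ.real {b | i < N b})⁻¹ • D i a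

lemma tsum_rouletteIncrement (a : α) :
    ∑' i, rouletteIncrement μ N D i a = rouletteEstimator μ N D a := by
  refine (tsum_eq_sum (f := (rouletteIncrement μ N D · a)) (s := Finset.range (N a))
    fun i hi => Set.indicator_of_notMem (s := {b | i < N b})
      (fun h => hi (Finset.mem_range.mpr h)) _).trans ?_
  exact Finset.sum_congr rfl fun i hi =>
    Set.indicator_of_mem (s := {b | i < N b}) (Finset.mem_range.mp hi) _

lemma norm_rouletteIncrement (i : ℕ) (a : α) :
    ‖rouletteIncrement μ N D i a‖ = rouletteIncrement μ N (fun j b => ‖D j b‖) i a := by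
  simp only [rouletteIncrement, norm_indicator_eq_indicator_norm, norm_smul, norm_inv,
    Real.norm_of_nonneg measureReal_nonneg, smul_eq_mul]

lemma integrable_rouletteIncrement (hN : Measurable N) {i : ℕ} (hD : Integrable (D i) μ) :
    Integrable (rouletteIncrement μ N D i) μ :=
  (hD.smul _).indicator (hN measurableSet_Ioi)

variable [MeasurableSpace E] [BorelSpace E]

lemma integral_rouletteIncrement (hN : Measurable N) {i : ℕ} (hND : IndepFun N (D i) μ)
    (hD : AEStronglyMeasurable (D i) μ) (hp : μ.real {a | i < N a} ≠ 0) :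
    ∫ a, rouletteIncrement μ N D i a ∂μ = ∫ a, D i a ∂μ := by
  have hND' : IndepFun N (fun a => (μ.real {b | i < N b})⁻¹ • D i a) μ :=
    hND.comp measurable_id (measurable_const_smul _)
  refine (integral_indicator_preimage_of_indepFun (s := Set.Ioi i) hND' hN
    (hD.const_smul _) measurableSet_Ioi).trans ?_
  rw [integral_smul]
  exact smul_inv_smul₀ hp _

lemma lintegral_enorm_rouletteIncrement (hN : Measurable N) {i : ℕ} (hND : IndepFun N (D i) μ)
    (hD : Integrable (D i) μ) (hp : μ.real {a | i < N a} ≠ 0) :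
    ∫⁻ a, ‖rouletteIncrement μ N D i a‖ₑ ∂μ = ∫⁻ a, ‖D i a‖ₑ ∂μ := by
  rw [← ofReal_integral_norm_eq_lintegral_enorm (integrable_rouletteIncrement hN hD),
    ← ofReal_integral_norm_eq_lintegral_enorm hD]
  have hND' : IndepFun N (‖D i ·‖) μ := hND.comp measurable_id measurable_norm
  simp_rw [norm_rouletteIncrement]
  rw [integral_rouletteIncrement (D := fun j a => ‖D j a‖) hN hND' hD.norm.1 hp]

lemma tsum_lintegral_enorm_rouletteIncrement (hN : Measurable N)
    (hND : ∀ i, IndepFun N (D i) μ) (hD : ∀ i, AEStronglyMeasurable (D i) μ)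
    (hp : ∀ i, μ.real {a | i < N a} ≠ 0) (h : ∑' i, ∫⁻ a, ‖D i a‖ₑ ∂μ ≠ ∞) :
    ∑' i, ∫⁻ a, ‖rouletteIncrement μ N D i a‖ₑ ∂μ = ∑' i, ∫⁻ a, ‖D i a‖ₑ ∂μ :=
  tsum_congr fun i => lintegral_enorm_rouletteIncrement hN (hND i)
    (integrable_of_tsum_lintegral_enorm_ne_top hD h i) (hp i)

theorem integrable_rouletteEstimator [CompleteSpace E] (hN : Measurable N)
    (hND : ∀ i, IndepFun N (D i) μ) (hD : ∀ i, AEStronglyMeasurable (D i) μ)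
    (hp : ∀ i, μ.real {a | i < N a} ≠ 0) (h : ∑' i, ∫⁻ a, ‖D i a‖ₑ ∂μ ≠ ∞) :
    Integrable (rouletteEstimator μ N D) μ := by
  have hint i := integrable_rouletteIncrement hN (integrable_of_tsum_lintegral_enorm_ne_top hD h i)
  simpa only [tsum_rouletteIncrement] using integrable_tsum_of_tsum_lintegral_enorm_ne_top
    (fun i => (hint i).1) ((tsum_lintegral_enorm_rouletteIncrement hN hND hD hp h).trans_ne h)

theorem integral_rouletteEstimator (hN : Measurable N)
    (hND : ∀ i, IndepFun N (D i) μ) (hD : ∀ i, AEStronglyMeasurable (D i) μ)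
    (hp : ∀ i, μ.real {a | i < N a} ≠ 0) (h : ∑' i, ∫⁻ a, ‖D i a‖ₑ ∂μ ≠ ∞) :
    ∫ a, rouletteEstimator μ N D a ∂μ = ∑' i, ∫ a, D i a ∂μ := by
  have hint i := integrable_rouletteIncrement hN (integrable_of_tsum_lintegral_enorm_ne_top hD h i)
  simp_rw [← tsum_rouletteIncrement]
  rw [integral_tsum (fun i => (hint i).1)
    ((tsum_lintegral_enorm_rouletteIncrement hN hND hD hp h).trans_ne h)]
  exact tsum_congr fun i => integral_rouletteIncrement hN (hND i) (hD i) (hp i)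

end RussianRoulette

lemma sum_Icc_div_measure_eq_rouletteEstimator (μ : Measure α) (N : α → ℕ) (Y : ℕ → α → ℝ)
    (a : α) :
    ∑ i ∈ Finset.Icc 1 (N a), (Y i a - Y (i - 1) a) / (μ {b | i ≤ N b}).toReal =
      rouletteEstimator μ N (fun i b => Y (i + 1) b - Y i b) a := by
  simp [rouletteEstimator, Finset.sum_Icc_one_eq_sum_range, div_eq_inv_mul, measureReal_def]

end MeasureTheory

theorem russian_roulette_unbiased_general
    {Ω : Type*} [MeasurableSpace Ω] (μ : Measure Ω)
    (Y : ℕ → Ω → ℝ) (hYmeas : ∀ i, Measurable (Y i))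
    (hsum : ∫⁻ ω, (ENNReal.ofReal |Y 0 ω|
        + ∑' i : ℕ, ENNReal.ofReal |Y (i + 1) ω - Y i ω|) ∂μ ≠ ⊤)
    (N : Ω → ℕ) (hNmeas : Measurable N)
    (hindep : ProbabilityTheory.IndepFun N (fun ω => fun i : ℕ => Y i ω) μ)
    (hNpos : ∀ i : ℕ, 1 ≤ i → 0 < (μ {ω | i ≤ N ω}).toReal) :
    ∃ (Ylim : Ω → ℝ) (L : ℝ),
      Integrable Ylim μ ∧
      (∀ᵐ ω ∂μ, Tendsto (fun i => Y i ω) atTop (nhds (Ylim ω))) ∧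
      Tendsto (fun i => ∫ ω, |Y i ω - Ylim ω| ∂μ) atTop (nhds 0) ∧
      Tendsto (fun i => ∫ ω, Y i ω ∂μ) atTop (nhds L) ∧
      Integrable (fun ω => Y 0 ω + ∑ i ∈ Finset.Icc 1 (N ω),
          (Y i ω - Y (i - 1) ω) / (μ {ω' | i ≤ N ω'}).toReal) μ ∧
      ∫ ω, (Y 0 ω + ∑ i ∈ Finset.Icc 1 (N ω),
          (Y i ω - Y (i - 1) ω) / (μ {ω' | i ≤ N ω'}).toReal) ∂μ = L := by
  have hY i : AEStronglyMeasurable (Y i) μ := (hYmeas i).aestronglyMeasurable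
  simp only [← Real.enorm_eq_ofReal_abs] at hsum
  obtain ⟨hY0, hvar⟩ := integrable_zero_and_tsum_lintegral_enorm_sub_ne_top hY hsum
  set D : ℕ → Ω → ℝ := fun i ω => Y (i + 1) ω - Y i ω
  have hD i : AEStronglyMeasurable (D i) μ := (hY (i + 1)).sub (hY i)
  have hND i : IndepFun N (D i) μ :=
    hindep.comp measurable_id ((measurable_pi_apply _).sub (measurable_pi_apply _))
  have hp i : μ.real {ω | i < N ω} ≠ 0 := (hNpos (i + 1) i.succ_pos).ne'
  have hDsum : Integrable (fun ω => ∑' i, D i ω) μ :=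
    integrable_tsum_of_tsum_lintegral_enorm_ne_top hD hvar
  have hL1 := tendsto_lintegral_enorm_sub_add_tsum_sub hY hvar
  refine ⟨fun ω => Y 0 ω + ∑' i, D i ω, ∫ ω, Y 0 ω + ∑' i, D i ω ∂μ, hY0.add hDsum,
    ae_tendsto_add_tsum_sub hY hvar, ?_, tendsto_integral_of_L1 _ (hY0.add hDsum).1
      (.of_forall (integrable_of_tsum_lintegral_enorm_sub_ne_top hY0 hY hvar)) hL1, ?_, ?_⟩
  · refine ((ENNReal.tendsto_toReal ENNReal.zero_ne_top).comp hL1).congr fun n => ?_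
    exact (integral_norm_eq_lintegral_enorm ((hY n).sub (hY0.add hDsum).1)).symm
  · simp_rw [sum_Icc_div_measure_eq_rouletteEstimator]
    exact hY0.add (integrable_rouletteEstimator hNmeas hND hD hp hvar)
  · simp_rw [sum_Icc_div_measure_eq_rouletteEstimator]
    rw [integral_add hY0 (integrable_rouletteEstimator hNmeas hND hD hp hvar),
      integral_rouletteEstimator hNmeas hND hD hp hvar, integral_add hY0 hDsum,
      integral_tsum hD hvar]

/-- **Russian roulette truncation is unbiased.**
If `E[|Y 0| + ∑ᵢ |Y (i+1) - Y i|] < ∞`, then the sequence `(Y i)` converges almost surely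
and in `L¹` to an integrable limit, the limit `L` of the expectations `E[Y i]` exists, and
for any `ℕ`-valued `N` independent of the sequence with `P(N ≥ i) > 0` for all `i ≥ 1`,
the Russian roulette estimator `S = Y 0 + ∑_{i=1}^{N} (Y i - Y (i-1)) / P(N ≥ i)` is
integrable with `E[S] = L`. -/
theorem russian_roulette_unbiased
    {Ω : Type*} [MeasurableSpace Ω] (μ : Measure Ω) [IsProbabilityMeasure μ]
    (Y : ℕ → Ω → ℝ) (hYmeas : ∀ i, Measurable (Y i))
    (hsum : ∫⁻ ω, (ENNReal.ofReal |Y 0 ω|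
        + ∑' i : ℕ, ENNReal.ofReal |Y (i + 1) ω - Y i ω|) ∂μ ≠ ⊤)
    (N : Ω → ℕ) (hNmeas : Measurable N)
    (hindep : ProbabilityTheory.IndepFun N (fun ω => fun i : ℕ => Y i ω) μ)
    (hNpos : ∀ i : ℕ, 1 ≤ i → 0 < (μ {ω | i ≤ N ω}).toReal) :
    ∃ (Ylim : Ω → ℝ) (L : ℝ),
      Integrable Ylim μ ∧
      (∀ᵐ ω ∂μ, Tendsto (fun i => Y i ω) atTop (nhds (Ylim ω))) ∧
      Tendsto (fun i => ∫ ω, |Y i ω - Ylim ω| ∂μ) atTop (nhds 0) ∧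
      Tendsto (fun i => ∫ ω, Y i ω ∂μ) atTop (nhds L) ∧
      Integrable (fun ω => Y 0 ω + ∑ i ∈ Finset.Icc 1 (N ω),
          (Y i ω - Y (i - 1) ω) / (μ {ω' | i ≤ N ω'}).toReal) μ ∧
      ∫ ω, (Y 0 ω + ∑ i ∈ Finset.Icc 1 (N ω),
          (Y i ω - Y (i - 1) ω) / (μ {ω' | i ≤ N ω'}).toReal) ∂μ = L :=
  russian_roulette_unbiased_general μ Y hYmeas hsum N hNmeas hindep hNpos
end

section
/- Let (Y_i)_{i≥0} and (Ỹ_i)_{i≥0} be sequences of integrable real-valued random variables on a probability space such that E[Ỹ_i] = E[Y_i] for every i ≥ 0, the limit L := lim_{i→∞} E[Y_i] exists, and E[|Y_0| + Σ_{i=1}^∞ |Y_i − Ỹ_{i−1}|] < ∞. Let N be an ℕ-valued random variable independent of the pair of sequences with P(N ≥ i) > 0 for every i ≥ 1. Then the coupled Russian roulette estimator S := Y_0 + Σ_{i=1}^N (Y_i − Ỹ_{i−1})/P(N ≥ i) is integrable and E[S] = L. -/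
open MeasureTheory Filter ProbabilityTheory Finset

/-!
Write `Δ j = Y (j + 1) - Ỹ j`. Up to `Y 0`, the estimator is `∑ⱼ 1{j < N} Δ j / P(j < N)`, and
independence of `N` and `Δ j` gives each term mean `E[Δ j]` and absolute mean `E|Δ j|`. These
absolute means are summable by hypothesis, so integration commutes with the series and
`E[S] = E[Y 0] + ∑ⱼ E[Δ j]`; as `E[Ỹ j] = E[Y j]`, the series telescopes to `L - E[Y 0]`.
-/

section Integration

variable {α E : Type*} [MeasurableSpace α] {μ : Measure α} [NormedAddCommGroup E]

theorem integrable_tsum_of_summable_integral_norm [CompleteSpace E] {ι : Type*} [Countable ι]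
    {F : ι → α → E} (hF_int : ∀ i, Integrable (F i) μ) (hF_sum : Summable fun i ↦ ∫ a, ‖F i a‖ ∂μ) :
    Integrable (fun a ↦ ∑' i, F i a) μ := by
  set f : ι → α →₁[μ] E := fun i ↦ (hF_int i).toL1 (F i)
  have hf : ∑' i, ‖f i‖ₑ ≠ ⊤ := by
    refine tsum_enorm_ne_top_iff_summable_norm.2 (hF_sum.congr fun i ↦ ?_)
    rw [Integrable.norm_toL1_eq_lintegral_enorm, integral_norm_eq_lintegral_enorm (hF_int i).1]
  have hf_ae : ∀ᵐ a ∂μ, ∀ i, f i a = F i a := ae_all_iff.2 fun i ↦ (hF_int i).coeFn_toL1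
  refine (L1.integrable_coeFn (∑' i, f i)).congr ?_
  filter_upwards [Lp.coeFn_tsum hf, hf_ae] with a hsum hfa
  simp only [hsum, hfa]

theorem summable_integral_norm_of_lintegral_tsum_ne_top {ι : Type*} [Countable ι]
    {F : ι → α → E} (hF : ∀ i, AEStronglyMeasurable (F i) μ)
    (h : ∫⁻ a, ∑' i, ‖F i a‖ₑ ∂μ ≠ ⊤) : Summable fun i ↦ ∫ a, ‖F i a‖ ∂μ := by
  rw [lintegral_tsum fun i ↦ (hF i).enorm] at h
  simpa only [integral_norm_eq_lintegral_enorm (hF _)] using ENNReal.summable_toReal h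

end Integration

theorem HasSum.eq_sub_of_tendsto {a : ℕ → ℝ} {s L : ℝ} (hs : HasSum (fun n ↦ a (n + 1) - a n) s)
    (ha : Tendsto a atTop (nhds L)) : s = L - a 0 := by
  refine tendsto_nhds_unique hs.tendsto_sum_nat ?_
  simpa only [sum_range_sub] using ha.sub_const (a 0)

section Roulette

variable {Ω : Type*} [MeasurableSpace Ω] {μ : Measure Ω}

theorem integral_indicator_preimage_div_measureReal {β : Type*} [MeasurableSpace β]
    {N : Ω → β} {W : Ω → ℝ} {s : Set β} (hN : Measurable N) (hs : MeasurableSet s)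
    (hW : AEStronglyMeasurable W μ) (hNW : IndepFun N W μ) (hμs : μ.real (N ⁻¹' s) ≠ 0) :
    ∫ ω, (N ⁻¹' s).indicator (fun ω ↦ W ω / μ.real (N ⁻¹' s)) ω ∂μ = ∫ ω, W ω ∂μ := by
  set p := μ.real (N ⁻¹' s)
  have hφ : Measurable (s.indicator (1 : β → ℝ)) := measurable_const.indicator hs
  have hind : IndepFun (fun ω ↦ s.indicator 1 (N ω)) (fun ω ↦ W ω / p) μ :=
    hNW.comp hφ (measurable_id.div_const p)
  have hprod :
      (N ⁻¹' s).indicator (fun ω ↦ W ω / p) = fun ω ↦ s.indicator 1 (N ω) * (W ω / p) := by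
    ext ω
    by_cases h : N ω ∈ s <;> simp [h]
  have hmass : ∫ ω, s.indicator (1 : β → ℝ) (N ω) ∂μ = p := integral_indicator_one (hN hs)
  rw [hprod, hind.integral_fun_mul_eq_mul_integral
    (hφ.comp_aemeasurable hN.aemeasurable).aestronglyMeasurable
    ((continuous_id.div_const p).comp_aestronglyMeasurable hW), hmass, integral_div,
    mul_div_cancel₀ _ hμs]

noncomputable def rouletteTerm (μ : Measure Ω) (N : Ω → ℕ) (Δ : ℕ → Ω → ℝ) (j : ℕ) : Ω → ℝ :=
  {ω | j < N ω}.indicator fun ω ↦ Δ j ω / μ.real {ω | j < N ω}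

variable {N : Ω → ℕ} {Δ : ℕ → Ω → ℝ}

theorem sum_range_div_measureReal_eq_tsum_rouletteTerm (ω : Ω) :
    ∑ j ∈ range (N ω), Δ j ω / μ.real {ω' | j < N ω'} = ∑' j, rouletteTerm μ N Δ j ω := by
  rw [tsum_eq_sum (f := fun j ↦ rouletteTerm μ N Δ j ω) (s := range (N ω))
    fun j hj ↦ Set.indicator_of_notMem (s := {ω | j < N ω}) (mt mem_range.2 hj) _]
  exact sum_congr rfl fun j hj ↦ (Set.indicator_of_mem (s := {ω | j < N ω}) (mem_range.1 hj)
    fun ω ↦ Δ j ω / μ.real {ω | j < N ω}).symm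

theorem integrable_rouletteTerm (hN : Measurable N) (hΔ : ∀ j, Integrable (Δ j) μ) (j : ℕ) :
    Integrable (rouletteTerm μ N Δ j) μ :=
  ((hΔ j).div_const _).indicator (measurableSet_lt measurable_const hN)

theorem integral_rouletteTerm (hN : Measurable N) {j : ℕ} (hΔ : AEStronglyMeasurable (Δ j) μ)
    (hind : IndepFun N (Δ j) μ) (hpos : μ.real {ω | j < N ω} ≠ 0) :
    ∫ ω, rouletteTerm μ N Δ j ω ∂μ = ∫ ω, Δ j ω ∂μ :=
  integral_indicator_preimage_div_measureReal (s := Set.Ioi j) hN measurableSet_Ioi hΔ hind hpos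

theorem integral_norm_rouletteTerm (hN : Measurable N) {j : ℕ}
    (hΔ : AEStronglyMeasurable (Δ j) μ) (hind : IndepFun N (Δ j) μ)
    (hpos : μ.real {ω | j < N ω} ≠ 0) :
    ∫ ω, ‖rouletteTerm μ N Δ j ω‖ ∂μ = ∫ ω, ‖Δ j ω‖ ∂μ := by
  have hnorm : (fun ω ↦ ‖rouletteTerm μ N Δ j ω‖) = rouletteTerm μ N (fun j ω ↦ ‖Δ j ω‖) j := by
    ext ω
    simp only [rouletteTerm, norm_indicator_eq_indicator_norm, norm_div,
      Real.norm_of_nonneg measureReal_nonneg]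
  rw [hnorm]
  exact integral_rouletteTerm hN hΔ.norm (hind.comp measurable_id measurable_norm) hpos

theorem summable_integral_norm_rouletteTerm (hN : Measurable N)
    (hΔ : ∀ j, AEStronglyMeasurable (Δ j) μ) (hind : ∀ j, IndepFun N (Δ j) μ)
    (hpos : ∀ j, μ.real {ω | j < N ω} ≠ 0) (hsum : Summable fun j ↦ ∫ ω, ‖Δ j ω‖ ∂μ) :
    Summable fun j ↦ ∫ ω, ‖rouletteTerm μ N Δ j ω‖ ∂μ := by
  simpa only [integral_norm_rouletteTerm hN (hΔ _) (hind _) (hpos _)] using hsum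

theorem integrable_russianRoulette (hN : Measurable N) (hΔ : ∀ j, Integrable (Δ j) μ)
    (hind : ∀ j, IndepFun N (Δ j) μ) (hpos : ∀ j, μ.real {ω | j < N ω} ≠ 0)
    (hsum : Summable fun j ↦ ∫ ω, ‖Δ j ω‖ ∂μ) :
    Integrable (fun ω ↦ ∑ j ∈ range (N ω), Δ j ω / μ.real {ω' | j < N ω'}) μ := by
  simp only [sum_range_div_measureReal_eq_tsum_rouletteTerm]
  exact integrable_tsum_of_summable_integral_norm (integrable_rouletteTerm hN hΔ)
    (summable_integral_norm_rouletteTerm hN (fun j ↦ (hΔ j).1) hind hpos hsum)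

theorem hasSum_integral_russianRoulette (hN : Measurable N) (hΔ : ∀ j, Integrable (Δ j) μ)
    (hind : ∀ j, IndepFun N (Δ j) μ) (hpos : ∀ j, μ.real {ω | j < N ω} ≠ 0)
    (hsum : Summable fun j ↦ ∫ ω, ‖Δ j ω‖ ∂μ) :
    HasSum (fun j ↦ ∫ ω, Δ j ω ∂μ)
      (∫ ω, ∑ j ∈ range (N ω), Δ j ω / μ.real {ω' | j < N ω'} ∂μ) := by
  simp only [sum_range_div_measureReal_eq_tsum_rouletteTerm,
    ← integral_rouletteTerm hN (hΔ _).1 (hind _) (hpos _)]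
  exact hasSum_integral_of_summable_integral_norm (integrable_rouletteTerm hN hΔ)
    (summable_integral_norm_rouletteTerm hN (fun j ↦ (hΔ j).1) hind hpos hsum)

end Roulette

theorem coupled_russian_roulette_unbiased_general
    {Ω : Type*} [MeasurableSpace Ω] (μ : Measure Ω)
    (Y Yt : ℕ → Ω → ℝ)
    (hYint : ∀ i, Integrable (Y i) μ) (hYtint : ∀ i, Integrable (Yt i) μ)
    (hsamemean : ∀ i, ∫ ω, Yt i ω ∂μ = ∫ ω, Y i ω ∂μ)
    (L : ℝ) (hL : Tendsto (fun i => ∫ ω, Y i ω ∂μ) atTop (nhds L))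
    (hsum : ∫⁻ ω, (ENNReal.ofReal |Y 0 ω|
        + ∑' i : ℕ, ENNReal.ofReal |Y (i + 1) ω - Yt i ω|) ∂μ ≠ ⊤)
    (N : Ω → ℕ) (hNmeas : Measurable N)
    (hindep : ProbabilityTheory.IndepFun N
      (fun ω => ((fun i : ℕ => Y i ω), (fun i : ℕ => Yt i ω))) μ)
    (hNpos : ∀ i : ℕ, 1 ≤ i → 0 < (μ {ω | i ≤ N ω}).toReal) :
    Integrable (fun ω => Y 0 ω + ∑ i ∈ Finset.Icc 1 (N ω),
        (Y i ω - Yt (i - 1) ω) / (μ {ω' | i ≤ N ω'}).toReal) μ ∧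
    ∫ ω, (Y 0 ω + ∑ i ∈ Finset.Icc 1 (N ω),
        (Y i ω - Yt (i - 1) ω) / (μ {ω' | i ≤ N ω'}).toReal) ∂μ = L := by
  set Δ : ℕ → Ω → ℝ := fun j ω ↦ Y (j + 1) ω - Yt j ω
  have hreindex (ω : Ω) : ∑ i ∈ Icc 1 (N ω), (Y i ω - Yt (i - 1) ω) / (μ {ω' | i ≤ N ω'}).toReal
      = ∑ j ∈ range (N ω), Δ j ω / μ.real {ω' | j < N ω'} := by
    rw [← Ico_add_one_right_eq_Icc, sum_Ico_eq_sum_range, Nat.add_sub_cancel]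
    refine sum_congr rfl fun j _ ↦ ?_
    simp only [Δ, add_comm 1 j, Nat.add_sub_cancel]
    rfl
  have hΔ (j : ℕ) : Integrable (Δ j) μ := (hYint (j + 1)).sub (hYtint j)
  have hind (j : ℕ) : IndepFun N (Δ j) μ :=
    hindep.comp measurable_id
      (((measurable_pi_apply (j + 1)).comp measurable_fst).sub
        ((measurable_pi_apply j).comp measurable_snd))
  have hpos (j : ℕ) : μ.real {ω | j < N ω} ≠ 0 := (hNpos (j + 1) j.succ_pos).ne'
  have hsummable : Summable fun j ↦ ∫ ω, ‖Δ j ω‖ ∂μ :=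
    summable_integral_norm_of_lintegral_tsum_ne_top (fun j ↦ (hΔ j).1) <|
      ne_top_of_le_ne_top hsum <| lintegral_mono fun ω ↦ by
        simp only [Δ, Real.enorm_eq_ofReal_abs, le_add_self]
  have hincrement (j : ℕ) : ∫ ω, Δ j ω ∂μ = ∫ ω, Y (j + 1) ω ∂μ - ∫ ω, Y j ω ∂μ := by
    rw [integral_sub (hYint _) (hYtint _), hsamemean]
  have hint := integrable_russianRoulette hNmeas hΔ hind hpos hsummable
  have hmean := hasSum_integral_russianRoulette hNmeas hΔ hind hpos hsummable
  simp only [hincrement] at hmean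
  simp only [hreindex]
  refine ⟨(hYint 0).add hint, ?_⟩
  rw [integral_add (hYint 0) hint,
    HasSum.eq_sub_of_tendsto (a := fun i ↦ ∫ ω, Y i ω ∂μ) hmean hL, add_sub_cancel]

/-- **Coupled Russian roulette truncation is unbiased.**
If `(Y i)` and `(Ỹ i)` are integrable with `E[Ỹ i] = E[Y i]` for all `i`, the limit
`L = lim E[Y i]` exists, and `E[|Y 0| + ∑ᵢ |Y (i+1) - Ỹ i|] < ∞`, then for any `ℕ`-valued
`N` independent of the pair of sequences with `P(N ≥ i) > 0` for all `i ≥ 1`, the coupled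
Russian roulette estimator `S = Y 0 + ∑_{i=1}^{N} (Y i - Ỹ (i-1)) / P(N ≥ i)` is
integrable with `E[S] = L`. -/
theorem coupled_russian_roulette_unbiased
    {Ω : Type*} [MeasurableSpace Ω] (μ : Measure Ω) [IsProbabilityMeasure μ]
    (Y Yt : ℕ → Ω → ℝ) (hYmeas : ∀ i, Measurable (Y i)) (hYtmeas : ∀ i, Measurable (Yt i))
    (hYint : ∀ i, Integrable (Y i) μ) (hYtint : ∀ i, Integrable (Yt i) μ)
    (hsamemean : ∀ i, ∫ ω, Yt i ω ∂μ = ∫ ω, Y i ω ∂μ)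
    (L : ℝ) (hL : Tendsto (fun i => ∫ ω, Y i ω ∂μ) atTop (nhds L))
    (hsum : ∫⁻ ω, (ENNReal.ofReal |Y 0 ω|
        + ∑' i : ℕ, ENNReal.ofReal |Y (i + 1) ω - Yt i ω|) ∂μ ≠ ⊤)
    (N : Ω → ℕ) (hNmeas : Measurable N)
    (hindep : ProbabilityTheory.IndepFun N
      (fun ω => ((fun i : ℕ => Y i ω), (fun i : ℕ => Yt i ω))) μ)
    (hNpos : ∀ i : ℕ, 1 ≤ i → 0 < (μ {ω | i ≤ N ω}).toReal) :
    Integrable (fun ω => Y 0 ω + ∑ i ∈ Finset.Icc 1 (N ω),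
        (Y i ω - Yt (i - 1) ω) / (μ {ω' | i ≤ N ω'}).toReal) μ ∧
    ∫ ω, (Y 0 ω + ∑ i ∈ Finset.Icc 1 (N ω),
        (Y i ω - Yt (i - 1) ω) / (μ {ω' | i ≤ N ω'}).toReal) ∂μ = L :=
  coupled_russian_roulette_unbiased_general μ Y Yt hYint hYtint hsamemean L hL hsum N hNmeas hindep
    hNpos
end

section
/- Let w₀, v₁, v₂, … be positive reals, u₁, u₂, … ∈ [0,1], and define the forward-coupled Metropolis weight chains W and W̃ from them. If there exists j with 2 ≤ j ≤ i and v_j ≥ max{w₀, v₁}, then W_i = W̃_{i−1}; that is, proposing a weight at least as large as both the initial weight and the first proposed weight forces the two chains to couple. -/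
/-!
After the first step, `W` and `W̃` are two Metropolis chains started at `W₁` and `w₀` and driven by
the same proposals and uniforms. Until they meet, both weights stay at most `M = max w₀ v₁`: a
proposal above `M` would be accepted by both chains whatever the uniform (the acceptance ratio
is at least `1`), making them meet. So a proposal `v_j ≥ M` makes them meet by step `j`, and once
met they agree forever.
-/

open MeasureTheory

/-- The Metropolis weight update: from current weight `w`, proposed weight `w'`, and
uniform draw `u`, accept the proposal iff `u ≤ min 1 (w'/w)`. -/
noncomputable def metroF (w w' u : ℝ) : ℝ := if u ≤ min 1 (w' / w) then w' else w

/-- The forward Metropolis weight chain: `W 0 = w0`, `W (i+1) = f (W i) (v (i+1)) (u (i+1))`. -/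
noncomputable def fwdChain (w0 : ℝ) (v u : ℕ → ℝ) : ℕ → ℝ
  | 0 => w0
  | i + 1 => metroF (fwdChain w0 v u i) (v (i + 1)) (u (i + 1))

/-- The forward-coupled tilde chain: it skips the first proposal, so
`W̃ 0 = w0`, `W̃ (i+1) = f (W̃ i) (v (i+2)) (u (i+2))`; it shares each pair `(v j, u j)`
with the main chain whenever it processes proposal `j`. -/
noncomputable def fwdChainT (w0 : ℝ) (v u : ℕ → ℝ) : ℕ → ℝ
  | 0 => w0
  | i + 1 => metroF (fwdChainT w0 v u i) (v (i + 2)) (u (i + 2))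

section MetroF

variable {w w' u c : ℝ}

theorem metroF_pos (hw : 0 < w) (hw' : 0 < w') : 0 < metroF w w' u := by
  unfold metroF
  split_ifs <;> assumption

theorem metroF_le (hw : w ≤ c) (hw' : w' ≤ c) : metroF w w' u ≤ c := by
  unfold metroF
  split_ifs <;> assumption

theorem metroF_eq_of_le (hw : 0 < w) (hww' : w ≤ w') (hu : u ≤ 1) : metroF w w' u = w' := by
  have hratio : 1 ≤ w' / w := (one_le_div hw).mpr hww'
  rw [metroF, if_pos (by rwa [min_eq_left hratio])]

end MetroF

/-- Unlike `fwdChain`, proposals are indexed from `0`: step `n + 1` uses `p n` and `q n`. -/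
noncomputable def metroChain (x : ℝ) (p q : ℕ → ℝ) : ℕ → ℝ
  | 0 => x
  | n + 1 => metroF (metroChain x p q n) (p n) (q n)

section MetroChain

variable {x y c : ℝ} {p q : ℕ → ℝ} {m n : ℕ}

theorem metroChain_pos (hx : 0 < x) (hp : ∀ n, 0 < p n) (n : ℕ) : 0 < metroChain x p q n := by
  induction n with
  | zero => exact hx
  | succ n ih => exact metroF_pos ih (hp n)

theorem metroChain_eq_of_le_of_eq (hmn : m ≤ n) (h : metroChain x p q m = metroChain y p q m) :
    metroChain x p q n = metroChain y p q n := by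
  induction n, hmn using Nat.le_induction with
  | base => exact h
  | succ n _ ih => simp only [metroChain, ih]

theorem metroChain_succ_eq_of_le (hx : 0 < x) (hy : 0 < y) (hp : ∀ n, 0 < p n)
    (hq : ∀ n, q n ≤ 1) (hxn : metroChain x p q n ≤ p n) (hyn : metroChain y p q n ≤ p n) :
    metroChain x p q (n + 1) = metroChain y p q (n + 1) := by
  rw [metroChain, metroChain, metroF_eq_of_le (metroChain_pos hx hp n) hxn (hq n),
    metroF_eq_of_le (metroChain_pos hy hp n) hyn (hq n)]

theorem metroChain_eq_or_le (hx : 0 < x) (hy : 0 < y) (hp : ∀ n, 0 < p n) (hq : ∀ n, q n ≤ 1)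
    (hxc : x ≤ c) (hyc : y ≤ c) (n : ℕ) :
    metroChain x p q n = metroChain y p q n ∨
      metroChain x p q n ≤ c ∧ metroChain y p q n ≤ c := by
  induction n with
  | zero => exact Or.inr ⟨hxc, hyc⟩
  | succ n ih =>
    rcases ih with heq | ⟨hxn, hyn⟩
    · exact Or.inl (metroChain_eq_of_le_of_eq n.le_succ heq)
    rcases le_or_gt (p n) c with hpc | hcp
    · exact Or.inr ⟨metroF_le hxn hpc, metroF_le hyn hpc⟩
    · exact Or.inl (metroChain_succ_eq_of_le hx hy hp hq (hxn.trans hcp.le) (hyn.trans hcp.le))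

theorem metroChain_eq_of_le_proposal (hx : 0 < x) (hy : 0 < y) (hp : ∀ n, 0 < p n)
    (hq : ∀ n, q n ≤ 1) (hxc : x ≤ c) (hyc : y ≤ c) (hmn : m < n) (hcp : c ≤ p m) :
    metroChain x p q n = metroChain y p q n := by
  refine metroChain_eq_of_le_of_eq hmn ?_
  rcases metroChain_eq_or_le hx hy hp hq hxc hyc m with heq | ⟨hxm, hym⟩
  · exact metroChain_eq_of_le_of_eq m.le_succ heq
  · exact metroChain_succ_eq_of_le hx hy hp hq (hxm.trans hcp) (hym.trans hcp)

end MetroChain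

theorem fwdChain_succ_eq_metroChain (w0 : ℝ) (v u : ℕ → ℝ) (n : ℕ) :
    fwdChain w0 v u (n + 1) =
      metroChain (fwdChain w0 v u 1) (fun k ↦ v (k + 2)) (fun k ↦ u (k + 2)) n := by
  induction n with
  | zero => rfl
  | succ n ih => rw [fwdChain, ih, metroChain]

theorem fwdChainT_eq_metroChain (w0 : ℝ) (v u : ℕ → ℝ) (n : ℕ) :
    fwdChainT w0 v u n = metroChain w0 (fun k ↦ v (k + 2)) (fun k ↦ u (k + 2)) n := by
  induction n with
  | zero => rfl
  | succ n ih => rw [fwdChainT, ih, metroChain]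

/-- **A dominating proposal forces forward coupling.** If some proposal `v j` with
`2 ≤ j ≤ i` satisfies `v j ≥ max (w0) (v 1)`, then the forward-coupled chains have
coupled by step `i`: `W i = W̃ (i-1)`. -/
theorem fwd_coupling_of_dominating_proposal
    (w0 : ℝ) (v u : ℕ → ℝ) (hw0 : 0 < w0) (hv : ∀ i, 0 < v i)
    (hu : ∀ i, u i ∈ Set.Icc (0 : ℝ) 1) (i j : ℕ) (hj2 : 2 ≤ j) (hji : j ≤ i)
    (hvj : max w0 (v 1) ≤ v j) :
    fwdChain w0 v u i = fwdChainT w0 v u (i - 1) := by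
  obtain ⟨n, rfl⟩ : ∃ n, i = n + 1 := ⟨i - 1, by omega⟩
  rw [Nat.add_sub_cancel, fwdChain_succ_eq_metroChain, fwdChainT_eq_metroChain]
  have hW1 : fwdChain w0 v u 1 ≤ max w0 (v 1) := metroF_le (le_max_left _ _) (le_max_right _ _)
  refine metroChain_eq_of_le_proposal (m := j - 2) (metroF_pos hw0 (hv 1)) hw0 (fun _ ↦ hv _)
    (fun _ ↦ (hu _).2) hW1 (le_max_left _ _) (by omega) ?_
  rwa [Nat.sub_add_cancel hj2]
end

section
/- Fix a burn-in time T ≥ 2. Let w₀, v₁, v₂, … be i.i.d. positive real-valued random variables, let u₁, u₂, … be arbitrary random variables with values in [0,1], and define the forward-coupled Metropolis weight chains W and W̃ from them. Let N be any ℕ-valued random variable with P(N ≥ i) > 0 for all i ≥ 1, and define the burn-in forward coupled estimator S := 1/W_T + Σ_{i=1}^N (1/W_{T+i} − 1/W̃_{T+i−1})/P(N ≥ i). Then P(S > 0) ≥ 1 − 2/(T+1). -/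
open MeasureTheory

/-!
Both chains only ever hold weights among the proposals seen so far, so if some proposal `v j`
with `2 ≤ j ≤ T` is at least every earlier proposal, both chains accept it at step `j` and agree
from then on: every term of the sum vanishes and the estimator equals `1 / W T > 0`. Otherwise
the maximum of `v 0, …, v T` is carried by `{0, 1}` and strictly beats all other indices. For
i.i.d. weights this has probability at most `2 / (T + 1)`: the event "`x c` is maximal, strictly
except possibly against `x (c + 1)`" is, as `c` ranges over `ℤ/(T+1)`, a family of pairwise
disjoint events of equal probability, and similarly with `c - 1` in place of `c + 1`.
-/

open MeasureTheory ProbabilityTheory Function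

section Chains

lemma metroF_of_le {w w' u : ℝ} (hw : 0 < w) (hle : w ≤ w') (hu : u ≤ 1) :
    metroF w w' u = w' := by
  have : min 1 (w' / w) = 1 := min_eq_left ((one_le_div hw).mpr hle)
  simp [metroF, this, hu]

lemma metroF_eq_or_eq (w w' u : ℝ) : metroF w w' u = w' ∨ metroF w w' u = w := by
  unfold metroF
  split_ifs <;> simp

variable (v u : ℕ → ℝ)

lemma fwdChain_mem_image_Iic (i : ℕ) : fwdChain (v 0) v u i ∈ v '' Set.Iic i := by
  induction i with
  | zero => exact ⟨0, Set.self_mem_Iic, rfl⟩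
  | succ i ih =>
    obtain ⟨k, hk, hi⟩ := ih
    rcases metroF_eq_or_eq (fwdChain (v 0) v u i) (v (i + 1)) (u (i + 1)) with h | h
    · exact ⟨i + 1, Set.self_mem_Iic, h.symm⟩
    · exact ⟨k, Nat.le_succ_of_le hk, hi.trans h.symm⟩

lemma fwdChainT_mem_image_Iic (i : ℕ) : fwdChainT (v 0) v u i ∈ v '' Set.Iic (i + 1) := by
  induction i with
  | zero => exact ⟨0, Set.mem_Iic.mpr (Nat.zero_le _), rfl⟩
  | succ i ih =>
    obtain ⟨k, hk, hi⟩ := ih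
    rcases metroF_eq_or_eq (fwdChainT (v 0) v u i) (v (i + 2)) (u (i + 2)) with h | h
    · exact ⟨i + 2, Set.self_mem_Iic, h.symm⟩
    · exact ⟨k, Nat.le_succ_of_le hk, hi.trans h.symm⟩

variable {v u}

lemma fwdChain_pos (hv : ∀ k, 0 < v k) (i : ℕ) : 0 < fwdChain (v 0) v u i := by
  obtain ⟨k, -, hk⟩ := fwdChain_mem_image_Iic v u i
  exact hk ▸ hv k

lemma fwdChainT_pos (hv : ∀ k, 0 < v k) (i : ℕ) : 0 < fwdChainT (v 0) v u i := by
  obtain ⟨k, -, hk⟩ := fwdChainT_mem_image_Iic v u i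
  exact hk ▸ hv k

lemma fwdChain_succ_eq_fwdChainT_of_le {w₀ : ℝ} {a b : ℕ}
    (h : fwdChain w₀ v u (a + 1) = fwdChainT w₀ v u a) (hab : a ≤ b) :
    fwdChain w₀ v u (b + 1) = fwdChainT w₀ v u b := by
  induction b, hab using Nat.le_induction with
  | base => exact h
  | succ b _ ih =>
    change metroF _ (v (b + 2)) (u (b + 2)) = metroF _ (v (b + 2)) (u (b + 2))
    rw [ih]

lemma fwdChain_succ_eq_fwdChainT_of_forall_le (hv : ∀ k, 0 < v k) (hu : ∀ k, u k ≤ 1)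
    {j i : ℕ} (hj : 2 ≤ j) (hrecord : ∀ k < j, v k ≤ v j) (hji : j ≤ i + 1) :
    fwdChain (v 0) v u (i + 1) = fwdChainT (v 0) v u i := by
  obtain ⟨m, rfl⟩ : ∃ m, j = m + 2 := ⟨j - 2, by omega⟩
  refine fwdChain_succ_eq_fwdChainT_of_le ?_ (by omega : m + 1 ≤ i)
  obtain ⟨k, hk, hW⟩ := fwdChain_mem_image_Iic v u (m + 1)
  obtain ⟨k', hk', hW'⟩ := fwdChainT_mem_image_Iic v u m
  change metroF _ (v (m + 2)) (u (m + 2)) = metroF _ (v (m + 2)) (u (m + 2))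
  rw [metroF_of_le (fwdChain_pos hv _) (hW ▸ hrecord k (Nat.lt_succ_of_le hk)) (hu _),
    metroF_of_le (fwdChainT_pos hv _) (hW' ▸ hrecord k' (Nat.lt_succ_of_le hk')) (hu _)]

lemma burnin_estimator_pos_of_forall_le (hv : ∀ k, 0 < v k) (hu : ∀ k, u k ≤ 1) {T j : ℕ}
    (hj : 2 ≤ j) (hjT : j ≤ T) (hmax : ∀ k ≤ T, v k ≤ v j) (n : ℕ) (c : ℕ → ℝ) :
    0 < 1 / fwdChain (v 0) v u T + ∑ i ∈ Finset.Icc 1 n,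
      (1 / fwdChain (v 0) v u (T + i) - 1 / fwdChainT (v 0) v u (T + i - 1)) / c i := by
  have hcoupled : ∀ i, fwdChain (v 0) v u (T + i) = fwdChainT (v 0) v u (T + i - 1) := by
    intro i
    have := fwdChain_succ_eq_fwdChainT_of_forall_le hv hu hj (fun k hk => hmax k (by omega))
      (i := T + i - 1) (by omega)
    rwa [Nat.sub_add_cancel (by omega)] at this
  simp only [hcoupled, sub_self, zero_div, Finset.sum_const_zero, add_zero]
  exact one_div_pos.mpr (fwdChain_pos hv T)

end Chains

lemma measureReal_le_inv_card_of_pairwise_disjoint {Ω ι : Type*} [MeasurableSpace Ω] [Fintype ι]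
    (μ : Measure Ω) [IsProbabilityMeasure μ] {H : ι → Set Ω} (hH : ∀ i, MeasurableSet (H i))
    (hdisj : Pairwise (Disjoint on H)) (i : ι) (heq : ∀ j, μ.real (H j) = μ.real (H i)) :
    μ.real (H i) ≤ 1 / Fintype.card ι := by
  have hunion := measureReal_iUnion_fintype (μ := μ) hdisj hH
  rw [Finset.sum_congr rfl fun j _ => heq j, Finset.sum_const, Finset.card_univ,
    nsmul_eq_mul] at hunion
  have hcard : (0 : ℝ) < Fintype.card ι := by exact_mod_cast Fintype.card_pos_iff.mpr ⟨i⟩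
  rw [le_div_iff₀ hcard, mul_comm, ← hunion]
  exact measureReal_le_one

lemma measurePreserving_comp_equiv {ι α : Type*} [Fintype ι] [MeasurableSpace α]
    (ν : Measure α) [SigmaFinite ν] (σ : ι ≃ ι) :
    MeasurePreserving (fun x : ι → α => x ∘ σ) (Measure.pi fun _ => ν)
      (Measure.pi fun _ => ν) := by
  convert measurePreserving_piCongrLeft (fun _ : ι => ν) σ.symm using 1
  ext x i
  simp [MeasurableEquiv.piCongrLeft, Equiv.piCongrLeft]

lemma ProbabilityTheory.iIndepFun.map_comp_eq_pi {Ω ι κ β : Type*} [MeasurableSpace Ω]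
    [MeasurableSpace β] [Fintype κ] {μ : Measure Ω} {v : ι → Ω → β} (hindep : iIndepFun v μ)
    {i₀ : ι} (hident : ∀ i, IdentDistrib (v i) (v i₀) μ μ) {e : κ → ι} (he : e.Injective) :
    μ.map (fun ω k => v (e k) ω) = Measure.pi fun _ => μ.map (v i₀) := by
  rw [(hindep.precomp he).map_fun_eq_pi_map fun k => (hident (e k)).aemeasurable_fst]
  simp_rw [(hident _).map_eq]

section MaxAtExcept

variable {ι α : Type*} [LinearOrder α]

def maxAtExcept (c a : ι) : Set (ι → α) :=
  {x | x a ≤ x c ∧ ∀ k, k ≠ c → k ≠ a → x k < x c}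

lemma preimage_comp_maxAtExcept (σ : ι ≃ ι) (c a : ι) :
    (fun x : ι → α => x ∘ σ) ⁻¹' maxAtExcept c a = maxAtExcept (σ c) (σ a) := by
  ext x
  simp only [maxAtExcept, Set.mem_preimage, Set.mem_ofPred_eq, comp_apply]
  refine and_congr_right' ⟨fun h k hkc hka => ?_, fun h k hkc hka => h _ (by simpa) (by simpa)⟩
  simpa using h (σ.symm k) (by simpa [σ.symm_apply_eq] using hkc)
    (by simpa [σ.symm_apply_eq] using hka)

lemma pairwise_disjoint_maxAtExcept_add [AddGroup ι] {δ : ι} (hδ : δ + δ ≠ 0) :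
    Pairwise (Disjoint on fun c : ι => maxAtExcept (α := α) c (δ + c)) := by
  have hδc (c : ι) : c ≠ δ + (δ + c) := fun h =>
    hδ (by rwa [← add_assoc, eq_comm, add_eq_right] at h)
  intro c c' hcc'
  rw [onFun, Set.disjoint_left]
  rintro x ⟨htie, hlt⟩ ⟨htie', hlt'⟩
  by_cases h₁ : c' = δ + c
  · subst h₁
    exact (hlt' c hcc' (hδc c)).not_ge htie
  by_cases h₂ : c = δ + c'
  · subst h₂
    exact (hlt c' hcc'.symm (hδc c')).not_ge htie'
  exact (hlt c' hcc'.symm h₁).asymm (hlt' c hcc' h₂)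

lemma exists_forall_le_or_mem_maxAtExcept (v : ℕ → α) {T : ℕ} (hT : 1 ≤ T) :
    (∃ j, 2 ≤ j ∧ j ≤ T ∧ ∀ k ≤ T, v k ≤ v j) ∨
      (fun k : Fin (T + 1) => v k) ∈ maxAtExcept 0 1 ∪ maxAtExcept 1 0 := by
  by_cases h : ∃ j ∈ Finset.Icc 2 T, max (v 0) (v 1) ≤ v j
  · left
    obtain ⟨j₀, hj₀, hmax₀⟩ := h
    obtain ⟨j, hj, hjmax⟩ := (Finset.Icc 2 T).exists_max_image v ⟨j₀, hj₀⟩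
    rw [Finset.mem_Icc] at hj
    refine ⟨j, hj.1, hj.2, fun k hk => ?_⟩
    rcases lt_or_ge k 2 with hk2 | hk2
    · have : v k ≤ max (v 0) (v 1) := by interval_cases k <;> simp
      exact this.trans (hmax₀.trans (hjmax j₀ hj₀))
    · exact hjmax k (Finset.mem_Icc.mpr ⟨hk2, hk⟩)
  · right
    push Not at h
    have hval1 : ((1 : Fin (T + 1)) : ℕ) = 1 := by
      rw [Fin.val_one', Nat.mod_eq_of_lt (by omega)]
    have hrest (k : Fin (T + 1)) (hk0 : k ≠ 0) (hk1 : k ≠ 1) : v k < max (v 0) (v 1) := by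
      rw [Ne, Fin.ext_iff, Fin.val_zero] at hk0
      rw [Ne, Fin.ext_iff, hval1] at hk1
      exact h k (Finset.mem_Icc.mpr ⟨by omega, by omega⟩)
    rcases le_total (v 1) (v 0) with h10 | h01
    · refine .inl ⟨?_, fun k hk0 hk1 => ?_⟩
      · simpa only [hval1, Fin.val_zero] using h10
      · simpa only [Fin.val_zero, max_eq_left h10] using hrest k hk0 hk1
    · refine .inr ⟨?_, fun k hk1 hk0 => ?_⟩
      · simpa only [hval1, Fin.val_zero] using h01
      · simpa only [hval1, max_eq_right h01] using hrest k hk0 hk1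

variable [TopologicalSpace α] [OrderClosedTopology α] [SecondCountableTopology α]
  [MeasurableSpace α] [OpensMeasurableSpace α]

lemma measurableSet_maxAtExcept [Countable ι] (c a : ι) :
    MeasurableSet (maxAtExcept (α := α) c a) := by
  simp only [maxAtExcept, Set.ofPred_and, Set.ofPred_forall]
  exact (measurableSet_le (measurable_pi_apply a) (measurable_pi_apply c)).inter <|
    .iInter fun k => .iInter fun _ => .iInter fun _ =>
      measurableSet_lt (measurable_pi_apply k) (measurable_pi_apply c)

lemma measureReal_pi_maxAtExcept_add_le [Fintype ι] [AddGroup ι] (ν : Measure α)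
    [IsProbabilityMeasure ν] {δ : ι} (hδ : δ + δ ≠ 0) (c : ι) :
    (Measure.pi fun _ : ι => ν).real (maxAtExcept c (δ + c)) ≤ 1 / Fintype.card ι := by
  have htranslate (b : ι) : (Measure.pi fun _ : ι => ν).real (maxAtExcept b (δ + b)) =
      (Measure.pi fun _ : ι => ν).real (maxAtExcept 0 δ) := by
    have := (measurePreserving_comp_equiv ν (Equiv.addRight b)).measure_preimage
      (measurableSet_maxAtExcept (α := α) 0 δ).nullMeasurableSet
    rw [preimage_comp_maxAtExcept] at this
    simp only [Equiv.coe_addRight, zero_add] at this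
    exact congrArg ENNReal.toReal this
  exact measureReal_le_inv_card_of_pairwise_disjoint _ (fun b => measurableSet_maxAtExcept _ _)
    (pairwise_disjoint_maxAtExcept_add hδ) c fun b => by rw [htranslate, htranslate]

lemma measureReal_preimage_maxAtExcept_union_le {Ω : Type*} [MeasurableSpace Ω]
    {μ : Measure Ω} [IsProbabilityMeasure μ] {v : ℕ → Ω → α} (hindep : iIndepFun v μ)
    (hident : ∀ k, IdentDistrib (v k) (v 0) μ μ)
    {T : ℕ} (hT : 2 ≤ T) :
    μ.real ((fun ω (k : Fin (T + 1)) => v k ω) ⁻¹' (maxAtExcept 0 1 ∪ maxAtExcept 1 0)) ≤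
      2 / (T + 1) := by
  set X := fun ω (k : Fin (T + 1)) => v k ω
  have hX : AEMeasurable X μ := aemeasurable_pi_lambda _ fun k => (hident k).aemeasurable_fst
  have hlaw : μ.map X = Measure.pi fun _ => μ.map (v 0) :=
    hindep.map_comp_eq_pi hident Fin.val_injective
  have := Measure.isProbabilityMeasure_map (μ := μ) (hident 0).aemeasurable_fst
  have hE {δ : Fin (T + 1)} (hδ : δ + δ ≠ 0) (c : Fin (T + 1)) :
      μ.real (X ⁻¹' maxAtExcept c (δ + c)) ≤ 1 / (T + 1) := by
    rw [← map_measureReal_apply_of_aemeasurable hX (measurableSet_maxAtExcept _ _), hlaw]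
    simpa using measureReal_pi_maxAtExcept_add_le (μ.map (v 0)) hδ c
  have h11 : (1 : Fin (T + 1)) + 1 ≠ 0 := by
    have hval1 : ((1 : Fin (T + 1)) : ℕ) = 1 := by
      rw [Fin.val_one', Nat.mod_eq_of_lt (by omega)]
    rw [Ne, Fin.ext_iff, Fin.val_add, hval1, Fin.val_zero, Nat.mod_eq_of_lt (by omega)]
    omega
  calc μ.real (X ⁻¹' (maxAtExcept 0 1 ∪ maxAtExcept 1 0))
      ≤ μ.real (X ⁻¹' maxAtExcept 0 1) + μ.real (X ⁻¹' maxAtExcept 1 0) := by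
        rw [Set.preimage_union]
        exact measureReal_union_le _ _
    _ ≤ 1 / (T + 1) + 1 / (T + 1) := by
        gcongr
        · simpa using hE h11 0
        · simpa using hE (δ := -1) (by rwa [← neg_add, neg_ne_zero]) 1
    _ = 2 / (T + 1) := by ring

end MaxAtExcept

theorem burnin_fce_positive_probability_general
    {Ω : Type*} [MeasurableSpace Ω] (μ : Measure Ω) [IsProbabilityMeasure μ]
    (T : ℕ) (hT : 2 ≤ T) (v u : ℕ → Ω → ℝ)
    (hvpos : ∀ k ω, 0 < v k ω) (hu : ∀ k ω, u k ω ∈ Set.Icc (0 : ℝ) 1)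
    (hindep : ProbabilityTheory.iIndepFun v μ)
    (hident : ∀ k, ProbabilityTheory.IdentDistrib (v k) (v 0) μ μ)
    (N : Ω → ℕ) :
    1 - 2 / ((T : ℝ) + 1) ≤
      (μ {ω | 0 < 1 / fwdChain (v 0 ω) (fun k => v k ω) (fun k => u k ω) T
        + ∑ i ∈ Finset.Icc 1 (N ω),
          (1 / fwdChain (v 0 ω) (fun k => v k ω) (fun k => u k ω) (T + i)
            - 1 / fwdChainT (v 0 ω) (fun k => v k ω) (fun k => u k ω) (T + i - 1))
            / (μ {ω' | i ≤ N ω'}).toReal}).toReal := by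
  set X : Ω → Fin (T + 1) → ℝ := fun ω k => v k ω
  set F := X ⁻¹' (maxAtExcept 0 1 ∪ maxAtExcept 1 0)
  have hX : AEMeasurable X μ := aemeasurable_pi_lambda _ fun k => (hident k).aemeasurable_fst
  have hF : NullMeasurableSet F μ :=
    hX.nullMeasurable ((measurableSet_maxAtExcept 0 1).union (measurableSet_maxAtExcept 1 0))
  refine le_trans ?_ (measureReal_mono (s₁ := Fᶜ) fun ω hω => ?_)
  · rw [probReal_compl_eq_one_sub₀ hF]
    linarith [measureReal_preimage_maxAtExcept_union_le hindep hident hT]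
  · obtain ⟨j, hj, hjT, hmax⟩ :=
      (exists_forall_le_or_mem_maxAtExcept (fun k => v k ω) (by omega)).resolve_right hω
    exact burnin_estimator_pos_of_forall_le (fun k => hvpos k ω) (fun k => (hu k ω).2) hj hjT
      hmax _ _

/-- **Positivity of the burn-in forward coupled estimator.** With i.i.d. positive weights
`w0 = v 0, v 1, v 2, …`, arbitrary `[0,1]`-valued `u`'s, a burn-in time `T ≥ 2`, and any
`ℕ`-valued `N` with `P(N ≥ i) > 0` for all `i ≥ 1`, the burn-in forward coupled estimator
`S = 1/W T + ∑_{i=1}^{N} (1/W (T+i) - 1/W̃ (T+i-1)) / P(N ≥ i)` is strictly positive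
with probability at least `1 - 2/(T+1)`. -/
theorem burnin_fce_positive_probability
    {Ω : Type*} [MeasurableSpace Ω] (μ : Measure Ω) [IsProbabilityMeasure μ]
    (T : ℕ) (hT : 2 ≤ T) (v u : ℕ → Ω → ℝ)
    (hvmeas : ∀ k, Measurable (v k)) (humeas : ∀ k, Measurable (u k))
    (hvpos : ∀ k ω, 0 < v k ω) (hu : ∀ k ω, u k ω ∈ Set.Icc (0 : ℝ) 1)
    (hindep : ProbabilityTheory.iIndepFun v μ)
    (hident : ∀ k, ProbabilityTheory.IdentDistrib (v k) (v 0) μ μ)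
    (N : Ω → ℕ) (hNmeas : Measurable N)
    (hNpos : ∀ i : ℕ, 1 ≤ i → 0 < μ {ω | i ≤ N ω}) :
    1 - 2 / ((T : ℝ) + 1) ≤
      (μ {ω | 0 < 1 / fwdChain (v 0 ω) (fun k => v k ω) (fun k => u k ω) T
        + ∑ i ∈ Finset.Icc 1 (N ω),
          (1 / fwdChain (v 0 ω) (fun k => v k ω) (fun k => u k ω) (T + i)
            - 1 / fwdChainT (v 0 ω) (fun k => v k ω) (fun k => u k ω) (T + i - 1))
            / (μ {ω' | i ≤ N ω'}).toReal}).toReal :=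
  burnin_fce_positive_probability_general μ T hT v u hvpos hu hindep hident N
end

section
/- Fix i ≥ 1 and let w₀, …, w_i ∈ {2, 4} be such that 2·|{j : 0 ≤ j < i, w_j = 2}| ≥ i (at least half of the first i values equal 2) and w_i = 4. Define S_k = Σ_{j=0}^k w_j and Y_k = (k+1)/S_k. Then Y_i − Y_{i−1} ≤ −1/(9i + 12). -/
open Classical

open Finset

/-! Write `S = ∑_{j<i} w j` and let `c` count the `j < i` with `w j = 2`. Then `S + 2c = 4i`, so
`Y_i - Y_{i-1} = (i+1)/(S+4) - i/S = (S - 4i)/(S(S+4)) = -2c/(S(S+4))`, and the hypotheses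
`i ≤ 2c`, `S ≤ 3i` bound `S(S+4)` by `i(9i+12) ≤ 2c(9i+12)`. -/

theorem sum_add_mul_card_filter_eq_of_forall_eq_or_eq {ι : Type*} (s : Finset ι) (w : ι → ℝ)
    {a b : ℝ} (hw : ∀ j ∈ s, w j = a ∨ w j = b) :
    ∑ j ∈ s, w j + (b - a) * #{j ∈ s | w j = a} = b * #s := by
  have hshortfall : ∀ j ∈ s, w j + (if w j = a then b - a else 0) = b := by
    intro j hj
    rcases hw j hj with h | h <;> by_cases ha : w j = a <;> simp_all
  rw [natCast_card_filter, mul_sum, ← sum_add_distrib, sum_congr rfl fun j hj => ?_,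
    sum_const, nsmul_eq_mul, mul_comm]
  simpa only [mul_ite, mul_one, mul_zero] using hshortfall j hj

theorem div_sub_div_le_neg_inv_of_sum_add_two_mul_eq {n c S : ℝ} (hS : 0 < S)
    (hc : n ≤ 2 * c) (hS3 : S ≤ 3 * n) (hsum : S + 2 * c = 4 * n) :
    (n + 1) / (S + 4) - n / S ≤ -(1 / (9 * n + 12)) := by
  have hincrement : (n + 1) / (S + 4) - n / S = -(2 * c / (S * (S + 4))) := by
    field_simp
    linarith
  rw [hincrement, neg_le_neg_iff, div_le_div_iff₀ (by linarith) (by positivity)]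
  nlinarith [mul_le_mul hS3 (add_le_add_right hS3 4) (by linarith) (by linarith)]

/-- **Deterministic core of the IAE counterexample.** With weights `w j ∈ {2, 4}` such
that at least half of `w 0, …, w (i-1)` equal `2` and `w i = 4`, the Increasing Averages
Estimator `Y k = (k+1) / (∑_{j=0}^{k} w j)` satisfies
`Y i - Y (i-1) ≤ -1/(9i + 12)`. -/
theorem iae_counterexample_decrement
    (i : ℕ) (hi : 1 ≤ i) (w : ℕ → ℝ)
    (hw : ∀ j ≤ i, w j = 2 ∨ w j = 4)
    (hhalf : i ≤ 2 * ((Finset.range i).filter (fun j => w j = 2)).card)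
    (hwi : w i = 4) :
    ((i : ℝ) + 1) / (∑ j ∈ Finset.range (i + 1), w j)
      - (i : ℝ) / (∑ j ∈ Finset.range i, w j)
      ≤ -(1 / (9 * (i : ℝ) + 12)) := by
  have hsum : ∑ j ∈ range i, w j + 2 * #{j ∈ range i | w j = 2} = 4 * i := by
    have := sum_add_mul_card_filter_eq_of_forall_eq_or_eq (range i) w
      fun j hj => hw j (mem_range.1 hj).le
    rwa [card_range, show (4 : ℝ) - 2 = 2 by norm_num] at this
  have hcard : (#{j ∈ range i | w j = 2} : ℝ) ≤ i := by
    exact_mod_cast (card_filter_le _ _).trans (card_range i).le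
  have hhalf' : (i : ℝ) ≤ 2 * #{j ∈ range i | w j = 2} := by exact_mod_cast hhalf
  have hi' : (1 : ℝ) ≤ i := by exact_mod_cast hi
  rw [sum_range_succ, hwi]
  exact div_sub_div_le_neg_inv_of_sum_add_two_mul_eq (by linarith) hhalf' (by linarith) hsum
end

section
/- Let w₀, w₁, w₂, … be i.i.d. random variables uniform on {2, 4}, and define the Increasing Averages Estimator Y_i = (i+1)/(Σ_{j=0}^i w_j). Then for every i ≥ 1, E[|Y_i − Y_{i−1}|] ≥ 1/(36i + 48), and consequently E[|Y_0| + Σ_{i=1}^∞ |Y_i − Y_{i−1}|] = ∞; that is, the Russian roulette integrability condition fails for the Increasing Averages Estimator in this example. -/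
/-!
On the almost sure event that every weight lies in `[2, 4]`, write `S = ∑_{j < i} w j` and
`W = w i`. Then `Y i - Y (i - 1) = (S - i W) / (S (S + W))` with `S (S + W) ≤ 16 i (i + 1)`, and,
since `|W - 3| ≤ 1`, `|S - i W| ≥ (i W - S) (W - 3)`. The right-hand side is linear in `S`, so
independence gives its expectation `i E[W (W - 3)] - E[S] E[W - 3] = i`. Hence
`E |Y i - Y (i - 1)| ≥ 1 / (16 (i + 1)) ≥ 1 / (36 i + 48)`, and the harmonic series diverges.
-/

open MeasureTheory ProbabilityTheory Finset
open scoped ENNReal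

section TwoPointLaw

variable {Ω α : Type*} [MeasurableSpace Ω] {μ : Measure Ω} [IsProbabilityMeasure μ]
  [MeasurableSpace α] [MeasurableSingletonClass α] {X : Ω → α} {a b : α}

lemma ae_eq_or_eq_of_measure_eq_half (hX : Measurable X) (hab : a ≠ b)
    (ha : μ {ω | X ω = a} = 1 / 2) (hb : μ {ω | X ω = b} = 1 / 2) :
    ∀ᵐ ω ∂μ, X ω = a ∨ X ω = b := by
  have hdisj : Disjoint {ω | X ω = a} {ω | X ω = b} :=
    Set.disjoint_left.2 fun ω hωa hωb => hab (hωa.symm.trans hωb)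
  have hunion : μ ({ω | X ω = a} ∪ {ω | X ω = b}) = 1 := by
    rw [measure_union hdisj (hX (measurableSet_singleton b)), ha, hb, ENNReal.add_halves]
  exact ae_iff.2 <| (prob_compl_eq_zero_iff
    ((hX (measurableSet_singleton a)).union (hX (measurableSet_singleton b)))).2 hunion

lemma comp_ae_eq_indicator_add_indicator (hX : Measurable X) (hab : a ≠ b)
    (ha : μ {ω | X ω = a} = 1 / 2) (hb : μ {ω | X ω = b} = 1 / 2) (φ : α → ℝ) :
    (fun ω => φ (X ω)) =ᵐ[μ] fun ω =>
      {ω | X ω = a}.indicator (fun _ => φ a) ω + {ω | X ω = b}.indicator (fun _ => φ b) ω := by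
  filter_upwards [ae_eq_or_eq_of_measure_eq_half hX hab ha hb] with ω hω
  rcases hω with h | h <;> simp [h, hab, hab.symm]

lemma integrable_comp_of_measure_eq_half (hX : Measurable X) (hab : a ≠ b)
    (ha : μ {ω | X ω = a} = 1 / 2) (hb : μ {ω | X ω = b} = 1 / 2) (φ : α → ℝ) :
    Integrable (fun ω => φ (X ω)) μ :=
  (((integrable_const (φ a)).indicator (hX (measurableSet_singleton a))).add
    ((integrable_const (φ b)).indicator (hX (measurableSet_singleton b)))).congr
    (comp_ae_eq_indicator_add_indicator hX hab ha hb φ).symm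

lemma integral_comp_of_measure_eq_half (hX : Measurable X) (hab : a ≠ b)
    (ha : μ {ω | X ω = a} = 1 / 2) (hb : μ {ω | X ω = b} = 1 / 2) (φ : α → ℝ) :
    ∫ ω, φ (X ω) ∂μ = (φ a + φ b) / 2 := by
  have hA : MeasurableSet {ω | X ω = a} := hX (measurableSet_singleton a)
  have hB : MeasurableSet {ω | X ω = b} := hX (measurableSet_singleton b)
  rw [integral_congr_ae (comp_ae_eq_indicator_add_indicator hX hab ha hb φ),
    integral_add ((integrable_const _).indicator hA) ((integrable_const _).indicator hB),
    integral_indicator_const _ hA, integral_indicator_const _ hB, measureReal_def,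
    measureReal_def, ha, hb]
  norm_num
  ring

end TwoPointLaw

lemma sum_range_mem_Icc {x : ℕ → ℝ} {m M : ℝ} (hx : ∀ j, x j ∈ Set.Icc m M) (n : ℕ) :
    ∑ j ∈ range n, x j ∈ Set.Icc (n * m) (n * M) := by
  constructor
  · simpa using card_nsmul_le_sum (range n) x m fun j _ => (hx j).1
  · simpa using sum_le_card_nsmul (range n) x M fun j _ => (hx j).2

lemma abs_div_add_sub_div_le_half {i s x : ℝ} (hi : 0 < i) (hs : i * 2 ≤ s) (hx : 2 ≤ x) :
    |(i + 1) / (s + x) - i / s| ≤ 1 / 2 :=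
  abs_sub_le_of_nonneg_of_le (div_nonneg (by linarith) (by linarith))
    ((div_le_iff₀ (by linarith)).2 (by linarith)) (div_nonneg hi.le (by linarith))
    ((div_le_iff₀ (by linarith)).2 (by linarith))

lemma div_le_abs_div_add_sub_div {i s x : ℝ} (hi : 0 < i) (hs : s ∈ Set.Icc (i * 2) (i * 4))
    (hx : x ∈ Set.Icc 2 4) :
    (i * x - s) * (x - 3) / (16 * (i * (i + 1))) ≤ |(i + 1) / (s + x) - i / s| := by
  obtain ⟨hs2, hs4⟩ := hs
  obtain ⟨hx2, hx4⟩ := hx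
  have hs0 : 0 < s := by linarith
  have hsx0 : 0 < s + x := by linarith
  calc (i * x - s) * (x - 3) / (16 * (i * (i + 1)))
      ≤ |s - i * x| / (16 * (i * (i + 1))) := by
        gcongr
        calc (i * x - s) * (x - 3) ≤ |i * x - s| * |x - 3| := by
              rw [← abs_mul]; exact le_abs_self _
          _ ≤ |s - i * x| := by
              rw [abs_sub_comm]
              exact mul_le_of_le_one_right (abs_nonneg _) (abs_le.2 ⟨by linarith, by linarith⟩)
    _ ≤ |s - i * x| / ((s + x) * s) :=
        div_le_div_of_nonneg_left (abs_nonneg _) (mul_pos hsx0 hs0) (by nlinarith)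
    _ = |(i + 1) / (s + x) - i / s| := by
        rw [div_sub_div _ _ hsx0.ne' hs0.ne', abs_div, abs_of_pos (mul_pos hsx0 hs0)]
        ring_nf

lemma not_summable_one_div_sixteen_mul_add_two :
    ¬Summable fun n : ℕ => 1 / (16 * ((n : ℝ) + 2)) := by
  intro h
  apply Real.not_summable_one_div_natCast
  rw [← summable_nat_add_iff 2]
  refine (h.mul_left 16).congr fun n => ?_
  push_cast
  field_simp

lemma lintegral_tsum_ofReal_eq_top {Ω : Type*} [MeasurableSpace Ω] {μ : Measure Ω}
    {f : ℕ → Ω → ℝ} (hf : ∀ n, Integrable (f n) μ) (hf0 : ∀ n, 0 ≤ᵐ[μ] f n)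
    (hsum : ¬Summable fun n => ∫ ω, f n ω ∂μ) :
    ∫⁻ ω, ∑' n, ENNReal.ofReal (f n ω) ∂μ = ⊤ := by
  rw [lintegral_tsum fun n => (hf n).aemeasurable.ennreal_ofReal]
  simp_rw [← ofReal_integral_eq_lintegral_ofReal (hf _) (hf0 _)]
  by_contra h
  exact hsum ((ENNReal.summable_toReal h).congr fun n =>
    ENNReal.toReal_ofReal (integral_nonneg_of_ae (hf0 n)))

/-- `|Y i - Y (i - 1)|`, where `Y i = (i + 1) / ∑_{j ≤ i} w j`. -/
noncomputable def iaeIncrement {Ω : Type*} (w : ℕ → Ω → ℝ) (i : ℕ) (ω : Ω) : ℝ :=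
  |((i : ℝ) + 1) / (∑ j ∈ range (i + 1), w j ω) - (i : ℝ) / (∑ j ∈ range i, w j ω)|

lemma iaeIncrement_succ {Ω : Type*} (w : ℕ → Ω → ℝ) (i : ℕ) (ω : Ω) :
    iaeIncrement w (i + 1) ω =
      |((i : ℝ) + 2) / (∑ j ∈ range (i + 2), w j ω)
        - ((i : ℝ) + 1) / (∑ j ∈ range (i + 1), w j ω)| := by
  rw [iaeIncrement]
  push_cast
  ring_nf

section Increment

variable {Ω : Type*} [MeasurableSpace Ω] {μ : Measure Ω} [IsProbabilityMeasure μ]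

lemma integrable_mul_sub_three_and_integral_eq {W X : Ω → ℝ} (hW : Measurable W)
    (h2 : μ {ω | W ω = 2} = 1 / 2) (h4 : μ {ω | W ω = 4} = 1 / 2) (hX : Integrable X μ)
    (hXW : IndepFun X W μ) (c : ℝ) :
    Integrable (fun ω => (c * W ω - X ω) * (W ω - 3)) μ ∧
      ∫ ω, (c * W ω - X ω) * (W ω - 3) ∂μ = c := by
  have hWW := integrable_comp_of_measure_eq_half hW (by norm_num) h2 h4 fun x => x * (x - 3)
  have hW3 := integrable_comp_of_measure_eq_half hW (by norm_num) h2 h4 fun x => x - 3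
  have hXW3 : IndepFun X (fun ω => W ω - 3) μ := hXW.comp measurable_id (measurable_sub_const 3)
  have hXW3_int : Integrable (fun ω => X ω * (W ω - 3)) μ := hXW3.integrable_mul hX hW3
  have hexpand : (fun ω => (c * W ω - X ω) * (W ω - 3))
      = fun ω => c * (W ω * (W ω - 3)) - X ω * (W ω - 3) := by
    funext ω; ring
  rw [hexpand]
  refine ⟨(hWW.const_mul c).sub hXW3_int, ?_⟩
  rw [integral_sub (hWW.const_mul c) hXW3_int, integral_const_mul,
    integral_comp_of_measure_eq_half hW (by norm_num) h2 h4 fun x => x * (x - 3),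
    hXW3.integral_fun_mul_eq_mul_integral hX.1 hW3.1,
    integral_comp_of_measure_eq_half hW (by norm_num) h2 h4 fun x => x - 3]
  norm_num

variable {w : ℕ → Ω → ℝ}

lemma ae_forall_mem_Icc_two_four (hmeas : ∀ k, Measurable (w k))
    (hlaw : ∀ k, μ {ω | w k ω = 2} = 1 / 2 ∧ μ {ω | w k ω = 4} = 1 / 2) :
    ∀ᵐ ω ∂μ, ∀ j, w j ω ∈ Set.Icc (2 : ℝ) 4 :=
  ae_all_iff.2 fun j =>
    (ae_eq_or_eq_of_measure_eq_half (hmeas j) (by norm_num) (hlaw j).1 (hlaw j).2).mono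
      fun ω h => by rcases h with h | h <;> norm_num [h]

lemma integrable_iaeIncrement (hmeas : ∀ k, Measurable (w k))
    (hlaw : ∀ k, μ {ω | w k ω = 2} = 1 / 2 ∧ μ {ω | w k ω = 4} = 1 / 2) {i : ℕ} (hi : 1 ≤ i) :
    Integrable (iaeIncrement w i) μ := by
  have hmeas_incr : Measurable (iaeIncrement w i) := by
    unfold iaeIncrement
    fun_prop
  refine Integrable.mono' (integrable_const (1 / 2 : ℝ)) hmeas_incr.aestronglyMeasurable ?_
  filter_upwards [ae_forall_mem_Icc_two_four hmeas hlaw] with ω hω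
  rw [Real.norm_eq_abs, iaeIncrement, abs_abs, sum_range_succ]
  exact abs_div_add_sub_div_le_half (by exact_mod_cast hi) (sum_range_mem_Icc hω i).1 (hω i).1

lemma le_integral_iaeIncrement (hmeas : ∀ k, Measurable (w k))
    (hindep : iIndepFun w μ)
    (hlaw : ∀ k, μ {ω | w k ω = 2} = 1 / 2 ∧ μ {ω | w k ω = 4} = 1 / 2) {i : ℕ} (hi : 1 ≤ i) :
    1 / (16 * ((i : ℝ) + 1)) ≤ ∫ ω, iaeIncrement w i ω ∂μ := by
  have hi' : (0 : ℝ) < i := by exact_mod_cast hi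
  have hindep_sum : IndepFun (fun ω => ∑ j ∈ range i, w j ω) (w i) μ := by
    simpa only [Finset.sum_fn] using hindep.indepFun_sum_range_succ hmeas i
  have hsum_int : Integrable (fun ω => ∑ j ∈ range i, w j ω) μ :=
    integrable_finsetSum _ fun j _ =>
      integrable_comp_of_measure_eq_half (hmeas j) (by norm_num) (hlaw j).1 (hlaw j).2 id
  obtain ⟨hint, hval⟩ :=
    integrable_mul_sub_three_and_integral_eq (hmeas i) (hlaw i).1 (hlaw i).2 hsum_int hindep_sum i
  calc 1 / (16 * ((i : ℝ) + 1))
      = ∫ ω, (i * w i ω - ∑ j ∈ range i, w j ω) * (w i ω - 3) / (16 * (i * (i + 1))) ∂μ := by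
        rw [integral_div, hval]
        field_simp
    _ ≤ ∫ ω, iaeIncrement w i ω ∂μ := by
        refine integral_mono_ae (hint.div_const _) (integrable_iaeIncrement hmeas hlaw hi) ?_
        filter_upwards [ae_forall_mem_Icc_two_four hmeas hlaw] with ω hω
        rw [iaeIncrement, sum_range_succ]
        exact div_le_abs_div_add_sub_div hi' (sum_range_mem_Icc hω i) (hω i)

end Increment

/-- **The Increasing Averages Estimator violates the roulette integrability condition.**
For i.i.d. weights uniform on `{2, 4}` and `Y i = (i+1)/(∑_{j=0}^{i} w j)`, for every
`i ≥ 1` we have `E[|Y i - Y (i-1)|] ≥ 1/(36 i + 48)`, and consequently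
`E[|Y 0| + ∑_{i≥1} |Y i - Y (i-1)|] = ∞`. -/
theorem iae_integrability_fails
    {Ω : Type*} [MeasurableSpace Ω] (μ : Measure Ω) [IsProbabilityMeasure μ]
    (w : ℕ → Ω → ℝ) (hmeas : ∀ k, Measurable (w k))
    (hindep : ProbabilityTheory.iIndepFun w μ)
    (hlaw : ∀ k, μ {ω | w k ω = 2} = 1 / 2 ∧ μ {ω | w k ω = 4} = 1 / 2) :
    (∀ i : ℕ, 1 ≤ i →
      1 / (36 * (i : ℝ) + 48) ≤
        ∫ ω, |((i : ℝ) + 1) / (∑ j ∈ Finset.range (i + 1), w j ω)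
          - (i : ℝ) / (∑ j ∈ Finset.range i, w j ω)| ∂μ) ∧
    ∫⁻ ω, (ENNReal.ofReal |(1 : ℝ) / (∑ j ∈ Finset.range 1, w j ω)|
      + ∑' i : ℕ, ENNReal.ofReal
          |((i : ℝ) + 2) / (∑ j ∈ Finset.range (i + 2), w j ω)
            - ((i : ℝ) + 1) / (∑ j ∈ Finset.range (i + 1), w j ω)|) ∂μ = ⊤ := by
  refine ⟨fun i hi => le_trans ?_ (le_integral_iaeIncrement hmeas hindep hlaw hi), ?_⟩
  · gcongr
    linarith
  have hdiverge : ∫⁻ ω, ∑' i, ENNReal.ofReal (iaeIncrement w (i + 1) ω) ∂μ = ⊤ := by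
    refine lintegral_tsum_ofReal_eq_top (fun i => integrable_iaeIncrement hmeas hlaw (by omega))
      (fun i => ae_of_all _ fun ω => abs_nonneg _) fun hsum => ?_
    refine not_summable_one_div_sixteen_mul_add_two
      (hsum.of_nonneg_of_le (fun i => by positivity) fun i => ?_)
    rw [show (i : ℝ) + 2 = ((i + 1 : ℕ) : ℝ) + 1 by push_cast; ring]
    exact le_integral_iaeIncrement hmeas hindep hlaw (Nat.le_add_left 1 i)
  refine top_le_iff.1 (hdiverge ▸ lintegral_mono fun ω => ?_)
  simp only [iaeIncrement_succ]
  exact le_add_self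
end

section
/- Let μ be a σ-finite measure on a measurable space 𝒳, let Q : 𝒳 → [0,∞) and P* : 𝒳 → [0,∞) be measurable with ∫ Q dμ = 1 and ∫ P* dμ = Z for some Z ∈ (0,∞). Fix m ≥ 1 and define on 𝒳^m the function P*_m(x₁, …, x_m) = (1/m) Σ_{i=1}^m P*(x_i) Π_{j ≠ i} Q(x_j). Then ∫ P*_m d(μ^{⊗m}) = Z; that is, the averaged-weight augmented target P*_m has the same normalizing constant Z as P*. -/
open MeasureTheory Finset

/-!
Writing `P*(xᵢ) ∏_{j ≠ i} Q(xⱼ)` as a product of one-variable functions, Fubini's theorem on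
`μ^⊗m` turns its integral into `(∫ P* dμ) (∫ Q dμ)^(m-1) = Z`. Each of the `m` terms thus
contributes `Z`, and the factor `1/m` averages them back to `Z`.
-/

lemma mul_prod_erase_eq_prod_update {ι X M : Type*} [Fintype ι] [DecidableEq ι] [CommMonoid M]
    (P Q : X → M) (i : ι) (x : ι → X) :
    P (x i) * ∏ j ∈ univ.erase i, Q (x j) = ∏ j, Function.update (fun _ ↦ Q) i P j (x j) := by
  rw [← mul_prod_erase univ _ (mem_univ i), Function.update_self]
  congr 1
  exact prod_congr rfl fun j hj ↦ by rw [Function.update_of_ne (ne_of_mem_erase hj)]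

section

variable {ι X 𝕜 : Type*} [Fintype ι] [DecidableEq ι] [RCLike 𝕜] [MeasurableSpace X]
  {μ : Measure X} [SigmaFinite μ]

lemma integral_mul_prod_erase (P Q : X → 𝕜) (i : ι) :
    ∫ x : ι → X, P (x i) * ∏ j ∈ univ.erase i, Q (x j) ∂Measure.pi (fun _ ↦ μ)
      = (∫ x, P x ∂μ) * (∫ x, Q x ∂μ) ^ (Fintype.card ι - 1) := by
  simp_rw [mul_prod_erase_eq_prod_update, integral_fintype_prod_eq_prod,
    ← mul_prod_erase univ _ (mem_univ i), Function.update_self]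
  rw [prod_congr rfl fun j hj ↦ by rw [Function.update_of_ne (ne_of_mem_erase hj)], prod_const,
    card_erase_of_mem (mem_univ i), card_univ]

lemma integrable_mul_prod_erase {P Q : X → 𝕜} (hP : Integrable P μ) (hQ : Integrable Q μ)
    (i : ι) :
    Integrable (fun x : ι → X ↦ P (x i) * ∏ j ∈ univ.erase i, Q (x j))
      (Measure.pi fun _ ↦ μ) := by
  simp_rw [mul_prod_erase_eq_prod_update]
  refine Integrable.fintype_prod fun j ↦ ?_
  rcases eq_or_ne j i with rfl | hji
  · simpa using hP
  · simpa [hji] using hQ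

theorem integral_sum_mul_prod_erase {P Q : X → 𝕜} (hP : Integrable P μ) (hQ : Integrable Q μ) :
    ∫ x : ι → X, ∑ i, P (x i) * ∏ j ∈ univ.erase i, Q (x j) ∂Measure.pi (fun _ ↦ μ)
      = Fintype.card ι * ((∫ x, P x ∂μ) * (∫ x, Q x ∂μ) ^ (Fintype.card ι - 1)) := by
  rw [integral_finsetSum _ fun i _ ↦ integrable_mul_prod_erase hP hQ i]
  simp_rw [integral_mul_prod_erase, sum_const, card_univ, nsmul_eq_mul]

end

theorem augmented_target_normalizer_general
    {X : Type*} [MeasurableSpace X] (μ : Measure X) [SigmaFinite μ]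
    (Q Pstar : X → ℝ)
    (hQint : ∫ x, Q x ∂μ = 1)
    (Z : ℝ) (hZpos : 0 < Z) (hPint : ∫ x, Pstar x ∂μ = Z)
    (m : ℕ) (hm : 1 ≤ m) :
    ∫ x : Fin m → X,
        (1 / (m : ℝ)) * ∑ i : Fin m, Pstar (x i) * ∏ j ∈ Finset.univ.erase i, Q (x j)
      ∂(Measure.pi fun _ : Fin m => μ) = Z := by
  have hQ : Integrable Q μ := .of_integral_ne_zero (by rw [hQint]; exact one_ne_zero)
  have hP : Integrable Pstar μ := .of_integral_ne_zero (by rw [hPint]; exact hZpos.ne')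
  have hm0 : (m : ℝ) ≠ 0 := by exact_mod_cast Nat.one_le_iff_ne_zero.mp hm
  rw [integral_const_mul, integral_sum_mul_prod_erase hP hQ, hQint, hPint, one_pow, mul_one,
    Fintype.card_fin, one_div, inv_mul_cancel_left₀ hm0]

/-- **The averaged-weight augmented target has the same normalizer.** If `∫ Q dμ = 1` and
`∫ P* dμ = Z`, then the augmented unnormalized target
`P*_m(x₁, …, x_m) = (1/m) ∑ᵢ P*(xᵢ) ∏_{j ≠ i} Q(xⱼ)` on `𝒳^m` satisfies
`∫ P*_m d(μ^⊗m) = Z`. -/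
theorem augmented_target_normalizer
    {X : Type*} [MeasurableSpace X] (μ : Measure X) [SigmaFinite μ]
    (Q Pstar : X → ℝ) (hQmeas : Measurable Q) (hPmeas : Measurable Pstar)
    (hQnn : ∀ x, 0 ≤ Q x) (hPnn : ∀ x, 0 ≤ Pstar x)
    (hQint : ∫ x, Q x ∂μ = 1)
    (Z : ℝ) (hZpos : 0 < Z) (hPint : ∫ x, Pstar x ∂μ = Z)
    (m : ℕ) (hm : 1 ≤ m) :
    ∫ x : Fin m → X,
        (1 / (m : ℝ)) * ∑ i : Fin m, Pstar (x i) * ∏ j ∈ Finset.univ.erase i, Q (x j)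
      ∂(Measure.pi fun _ : Fin m => μ) = Z :=
  augmented_target_normalizer_general μ Q Pstar hQint Z hZpos hPint m hm
end
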